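/- arXiv:1808.00602 — 3 statements merged into one kernel-verified Lean document; each statement's English description precedes it below -/
import Mathlib

section
/- For partitions μ ⊆ λ and an integer g, either T_{λ/μ}(0,g) < 0 or T_{λ/μ}(0,g) = g - W(λ/μ) ≥ 0, where W(λ/μ) is the width of λ/μ. -/
/-- A partition: a weakly decreasing sequence of naturals, eventually zero
(finite support). `parts i` is the (i+1)-st part (0-indexed). -/
structure NatPartition where
  parts : ℕ →₀ ℕ
  antitone : ∀ ⦃i j : ℕ⦄, i ≤ j → parts j ≤ parts i

namespace NatPartition

/-- The weight `|λ|` of a partition: the sum of its parts. -/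
def weight (l : NatPartition) : ℕ := l.parts.sum fun _ n => n

/-- The (i+1)-st part of the conjugate partition: the number of indices `j`
with `parts j ≥ i + 1`. -/
def conj (l : NatPartition) (i : ℕ) : ℕ :=
  (l.parts.support.filter fun j => i + 1 ≤ l.parts j).card

end NatPartition

open NatPartition

/-- The (i+1)-st part of `ν''(λ,μ,n)`, namely `min (λ_i, max (μ_i, μ_i + n))`. -/
def nuppParts (lam mu : NatPartition) (n : ℤ) (i : ℕ) : ℕ :=
  min (lam.parts i) ((max ((mu.parts i : ℤ)) ((mu.parts i : ℤ) + n)).toNat)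

/-- The weight `|ν''(λ,μ,n)|`. -/
def nuppWeight (lam mu : NatPartition) (n : ℤ) : ℕ :=
  ∑ i ∈ lam.parts.support, nuppParts lam mu n i

/-- The (i+1)-st part of the conjugate of `ν'(λ,μ,n)`, namely
`max (μ̃_i, min (λ̃_i, λ̃_i - n))`. -/
def nupConj (lam mu : NatPartition) (n : ℤ) (i : ℕ) : ℕ :=
  (max ((mu.conj i : ℤ)) (min ((lam.conj i : ℤ)) ((lam.conj i : ℤ) - n))).toNat

/-- The (i+1)-st part of `ν'(λ,μ,n)`, obtained by conjugating back. -/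
def nupParts (lam mu : NatPartition) (n : ℤ) (i : ℕ) : ℕ :=
  ((Finset.range (lam.parts 0)).filter fun t => i + 1 ≤ nupConj lam mu n t).card

/-- The weight `|ν'(λ,μ,n)|` (computed as the sum of the parts of its conjugate). -/
def nupWeight (lam mu : NatPartition) (n : ℤ) : ℕ :=
  ∑ i ∈ Finset.range (lam.parts 0), nupConj lam mu n i

/-- The width `W(λ/μ) = max_i (λ_i - μ_i)`. -/
def skewWidth (lam mu : NatPartition) : ℕ :=
  lam.parts.support.sup fun i => lam.parts i - mu.parts i

/-- The height `H(λ/μ) = max_i (λ̃_i - μ̃_i)`. -/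
def skewHeight (lam mu : NatPartition) : ℕ :=
  (Finset.range (lam.parts 0)).sup fun i => lam.conj i - mu.conj i

/-- Containment `ν'(λ,μ,a) ⊆ ν''(λ,μ,b)` (partwise inequality). -/
def nupSubNupp (lam mu : NatPartition) (a b : ℤ) : Prop :=
  ∀ i, nupParts lam mu a i ≤ nuppParts lam mu b i

/-- The set of which the threshold number `T_{λ/μ}(f,g)` is the greatest element. -/
def threshSet (lam mu : NatPartition) (f g : ℤ) : Set ℤ :=
  {t : ℤ | nupSubNupp lam mu (f - t) (g - t)}

/-!
For `n ≤ 0` the partition `ν'(λ,μ,n)` is `λ` itself, so for `t ≥ 0` the containment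
`ν'(λ,μ,-t) ⊆ ν''(λ,μ,g-t)` says `λ_i ≤ max(μ_i, μ_i + g - t)` for every `i`, i.e. every nonzero
`λ_i - μ_i` is at most `g - t`. Hence the nonnegative part of the threshold set is either all of
`ℕ` (when `W(λ/μ) = 0`, which has no greatest element) or the interval `[0, g - W(λ/μ)]`.
-/

lemma Finset.forall_eq_zero_or_le_iff_sup {ι : Type*} (s : Finset ι) (f : ι → ℕ) (c : ℤ) :
    (∀ i ∈ s, f i = 0 ∨ (f i : ℤ) ≤ c) ↔ s.sup f = 0 ∨ ((s.sup f : ℕ) : ℤ) ≤ c := by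
  by_cases h : s.sup f = 0
  · simp only [h, true_or, iff_true]
    exact fun i hi => Or.inl (Nat.eq_zero_of_le_zero (h ▸ Finset.le_sup hi))
  have hs : s.Nonempty := Finset.nonempty_iff_ne_empty.2 (by rintro rfl; simp at h)
  obtain ⟨i, hi, hfi⟩ := Finset.exists_mem_eq_sup s hs f
  constructor
  · intro hall
    rcases hall i hi with h0 | hc
    · exact absurd (hfi ▸ h0) h
    · exact Or.inr (hfi ▸ hc)
  · rintro (h0 | hc) j hj
    · exact absurd h0 h
    · exact Or.inr ((Nat.cast_le.2 (Finset.le_sup hj)).trans hc)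

namespace NatPartition

lemma le_conj_iff (l : NatPartition) (i j : ℕ) :
    i + 1 ≤ l.conj j ↔ j + 1 ≤ l.parts i := by
  constructor
  · intro h
    obtain ⟨k, hk, hik⟩ : ∃ k ∈ l.parts.support.filter (fun k => j + 1 ≤ l.parts k), i ≤ k := by
      by_contra! hc
      have := Finset.card_le_card fun k hk => Finset.mem_range.2 (hc k hk)
      rw [Finset.card_range] at this
      exact absurd h (by unfold conj; omega)
    exact (Finset.mem_filter.1 hk).2.trans (l.antitone hik)
  · intro h
    have hsub : Finset.range (i + 1) ⊆ l.parts.support.filter fun k => j + 1 ≤ l.parts k := by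
      intro k hk
      have hk' : j + 1 ≤ l.parts k := h.trans (l.antitone (Nat.lt_succ_iff.1 (Finset.mem_range.1 hk)))
      exact Finset.mem_filter.2 ⟨Finsupp.mem_support_iff.2 (by omega), hk'⟩
    simpa [conj] using Finset.card_le_card hsub

lemma conj_mono {lam mu : NatPartition} (hsub : ∀ i, mu.parts i ≤ lam.parts i) (j : ℕ) :
    mu.conj j ≤ lam.conj j := by
  apply Finset.card_le_card
  intro k hk
  obtain ⟨-, hk⟩ := Finset.mem_filter.1 hk
  exact Finset.mem_filter.2 ⟨Finsupp.mem_support_iff.2 (by have := hsub k; omega), hk.trans (hsub k)⟩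

end NatPartition

open NatPartition

section

variable {lam mu : NatPartition}

lemma nupConj_of_nonpos (hsub : ∀ i, mu.parts i ≤ lam.parts i) {n : ℤ} (hn : n ≤ 0) (j : ℕ) :
    nupConj lam mu n j = lam.conj j := by
  have := conj_mono hsub j
  rw [nupConj, min_eq_left (by omega), max_eq_right (by exact_mod_cast this), Int.toNat_natCast]

lemma nupParts_of_nonpos (hsub : ∀ i, mu.parts i ≤ lam.parts i) {n : ℤ} (hn : n ≤ 0) (i : ℕ) :
    nupParts lam mu n i = lam.parts i := by
  have hrange : (Finset.range (lam.parts 0)).filter (fun t => i + 1 ≤ nupConj lam mu n t)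
      = Finset.range (lam.parts i) := by
    ext t
    simp only [Finset.mem_filter, Finset.mem_range, nupConj_of_nonpos hsub hn, le_conj_iff]
    have := lam.antitone (Nat.zero_le i)
    omega
  rw [nupParts, hrange, Finset.card_range]

lemma mem_threshSet_zero_iff_forall (hsub : ∀ i, mu.parts i ≤ lam.parts i) (g : ℤ) {t : ℤ}
    (ht : 0 ≤ t) : t ∈ threshSet lam mu 0 g ↔
      ∀ i, lam.parts i - mu.parts i = 0 ∨ ((lam.parts i - mu.parts i : ℕ) : ℤ) ≤ g - t := by
  refine forall_congr' fun i => ?_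
  rw [nupParts_of_nonpos hsub (by omega), nuppParts]
  have := hsub i
  omega

lemma mem_threshSet_zero_iff (hsub : ∀ i, mu.parts i ≤ lam.parts i) (g : ℤ) {t : ℤ}
    (ht : 0 ≤ t) : t ∈ threshSet lam mu 0 g ↔
      skewWidth lam mu = 0 ∨ (skewWidth lam mu : ℤ) ≤ g - t := by
  rw [mem_threshSet_zero_iff_forall hsub g ht, skewWidth,
    ← Finset.forall_eq_zero_or_le_iff_sup]
  refine ⟨fun h i _ => h i, fun h i => ?_⟩
  by_cases hi : i ∈ lam.parts.support
  · exact h i hi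
  · simp [Finsupp.notMem_support_iff.1 hi]

end

/-- Either `T_{λ/μ}(0,g) < 0` or `T_{λ/μ}(0,g) = g - W(λ/μ) ≥ 0`. -/
theorem stmt10 (lam mu : NatPartition) (hsub : ∀ i, mu.parts i ≤ lam.parts i)
    (g T : ℤ) (hT : IsGreatest (threshSet lam mu 0 g) T) :
    T < 0 ∨ (T = g - (skewWidth lam mu : ℤ) ∧ 0 ≤ T) := by
  rcases lt_or_ge T 0 with hneg | hnonneg
  · exact Or.inl hneg
  have mem_iff : ∀ {t : ℤ}, 0 ≤ t → _ := fun ht => mem_threshSet_zero_iff hsub g ht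
  rcases (mem_iff hnonneg).1 hT.1 with hW | hWle
  · have := hT.2 ((mem_iff (by omega : (0 : ℤ) ≤ T + 1)).2 (Or.inl hW))
    omega
  · have := hT.2 ((mem_iff (by omega : 0 ≤ g - (skewWidth lam mu : ℤ))).2 (Or.inr (by omega)))
    exact Or.inr ⟨by omega, hnonneg⟩
end

section
/- Let R be a Noetherian commutative ring and let M be a nonzero torsion-free R-module with a finite free resolution 0 → F →^φ G → M → 0, and let f = rank F. Then the sequence F →^φ G →^{ε*} ∧^f F* ⊗ ∧^{f+1}G is exact at G, where ε* is the dual of the Buchsbaum–Rim map ε(φ) : ∧^{f+1}G* ⊗ ∧^f F → G*. -/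
open Matrix

/-- The coefficient of `e*_{I∖J}` (for `J = I.erase i`) in the Buchsbaum–Rim map
`ε(e*_I ⊗ b) = Σ_{J ⊂ I, |J| = f} sgn(J ⊂ I) det(φ_J) e*_{I∖J}`:
the sign `sgn(J ⊂ I) = (-1)^(f + 1 - k)` (where `i` is the `k`-th smallest element
of `I`) times the `f × f` minor of `M` on the rows indexed by `J = I ∖ {i}`. -/
noncomputable def epsCoeff {R : Type*} [CommRing R] {f g : ℕ}
    (M : Matrix (Fin g) (Fin f) R) (I : Finset (Fin g)) (hI : I.card = f + 1)
    (i : Fin g) (hi : i ∈ I) : R :=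
  (-1 : R) ^ (f - (I.filter fun j => j < i).card) *
    (M.submatrix
      (fun r : Fin f =>
        ((I.erase i).orderIsoOfFin
          (by rw [Finset.card_erase_of_mem hi, hI]; rfl) r : Fin g))
      id).det

/-!
If `y` is killed by `ε*`, all `(f + 1)`-minors of the augmented matrix `[y | φ]` vanish.
Expanding such a minor along an added row (Cramer's rule) gives `Δ • y ∈ im φ` for every
`f`-minor `Δ` of `φ`, so the ideal `(im φ : y)` contains the ideal of maximal minors of `φ`.
If `y ∉ im φ`, torsion freeness of `coker φ` makes every element of `(im φ : y)` a zero divisor;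
as `R` is Noetherian the ideal then lies in an associated prime and is killed by some `a ≠ 0`.
So `a` kills all maximal minors of `φ`, and McCoy's theorem contradicts the injectivity of `φ`.
Conversely, for `y = φ x` the first column of `[y | φ]` is a combination of the others.
-/

open Finset Function

namespace Matrix

def consCol {α m : Type*} {n : ℕ} (y : m → α) (M : Matrix m (Fin n) α) :
    Matrix m (Fin (n + 1)) α :=
  of fun i => Fin.cons (y i) (M i)

theorem submatrix_consCol {α m m' : Type*} {n : ℕ} (y : m → α) (M : Matrix m (Fin n) α)
    (u : m' → m) : (consCol y M).submatrix u id = consCol (y ∘ u) (M.submatrix u id) := rfl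

theorem submatrix_consCol_succ {α m m' : Type*} {n : ℕ} (y : m → α) (M : Matrix m (Fin n) α)
    (u : m' → m) : (consCol y M).submatrix u Fin.succ = M.submatrix u id := rfl

variable {R : Type*} [CommRing R]

def signedMaxMinors {t : ℕ} (B : Matrix (Fin t) (Fin (t + 1)) R) : Fin (t + 1) → R :=
  fun j => (-1) ^ (j : ℕ) * (B.submatrix id j.succAbove).det

theorem mulVec_signedMaxMinors {m : Type*} {t : ℕ} (N : Matrix m (Fin (t + 1)) R)
    (e : Fin t → m) (i : m) :
    (N *ᵥ signedMaxMinors (N.submatrix e id)) i = (N.submatrix (Fin.cons i e) id).det := by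
  rw [mulVec, dotProduct, det_succ_row_zero]
  refine Finset.sum_congr rfl fun j _ => ?_
  simp only [signedMaxMinors, submatrix_apply, submatrix_submatrix, Fin.cons_zero, id_eq,
    Fin.cons_comp_succ, comp_id]
  ring

theorem consCol_mulVec {m : Type*} {n : ℕ} (y : m → R) (M : Matrix m (Fin n) R)
    (s : Fin (n + 1) → R) : consCol y M *ᵥ s = s 0 • y + M *ᵥ Fin.tail s := by
  ext i
  simp [consCol, mulVec, dotProduct, Fin.sum_univ_succ, Fin.tail, mul_comm]

theorem det_consCol_mulVec {n : ℕ} (B : Matrix (Fin (n + 1)) (Fin n) R) (x : Fin n → R) :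
    (consCol (B *ᵥ x) B).det = 0 := by
  have h := det_updateCol_sum (consCol 0 B) 0 (Fin.cons 0 x)
  have hcol : (consCol 0 B).updateCol 0 (fun k => ∑ i, (Fin.cons 0 x : Fin (n + 1) → R) i •
      consCol 0 B k i) = consCol (B *ᵥ x) B := by
    ext k j
    refine Fin.cases ?_ (fun j => ?_) j
    · simp [consCol, Fin.sum_univ_succ, mulVec, dotProduct, mul_comm]
    · simp [consCol, Fin.succ_ne_zero]
  rw [← hcol, h, Fin.cons_zero, zero_smul]

theorem det_submatrix_eq_zero_of_forall_orderEmbOfFin {α n : Type*} [LinearOrder α] {k : ℕ}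
    (A : Matrix α n R) (c : Fin k → n)
    (h : ∀ (S : Finset α) (hS : S.card = k), (A.submatrix (S.orderEmbOfFin hS) c).det = 0)
    (u : Fin k → α) : (A.submatrix u c).det = 0 := by
  by_cases hu : Injective u
  · set S := univ.image u
    have hS : S.card = k := by rw [card_image_of_injective _ hu, card_fin]
    have hmem : ∀ i, u i ∈ S := fun i => mem_image_of_mem u (mem_univ i)
    set σ : Fin k → Fin k := fun i => (S.orderIsoOfFin hS).symm ⟨u i, hmem i⟩
    have hσ : ∀ i, S.orderEmbOfFin hS (σ i) = u i := fun i => by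
      rw [← coe_orderIsoOfFin_apply, OrderIso.apply_symm_apply]
    have hσinj : Injective σ := fun i j hij => hu (by rw [← hσ i, ← hσ j, hij])
    set τ := Equiv.ofBijective σ (Finite.injective_iff_bijective.mp hσinj)
    have hA : A.submatrix u c = (A.submatrix (S.orderEmbOfFin hS) c).submatrix τ id := by
      ext i j
      simp [τ, hσ]
    rw [hA, det_permute, h, mul_zero]
  · obtain ⟨i, j, hij, hne⟩ : ∃ i j, u i = u j ∧ i ≠ j := by
      simpa [Injective] using hu
    exact det_zero_of_row_eq hne (by ext; simp [hij])

theorem injective_mulVec_submatrix_id {m n k : Type*} [Fintype n] [Fintype k]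
    {M : Matrix m n R} (hM : Injective M.mulVec) {c : k → n} (hc : Injective c) :
    Injective (M.submatrix id c).mulVec := by
  have hext : ∀ w : k → R, M.submatrix id c *ᵥ w = M *ᵥ extend c w 0 := fun w => by
    ext i
    refine Fintype.sum_of_injective c hc _ _ (fun j hj => ?_) (fun l => ?_)
    · rw [extend_apply' _ _ _ (by simpa using hj), Pi.zero_apply, mul_zero]
    · change M i (c l) * w l = M i (c l) * extend c w 0 (c l)
      rw [hc.extend_apply]
  intro w w' hww'
  have h := hM (by rw [← hext, ← hext, hww'] : M *ᵥ extend c w 0 = M *ᵥ extend c w' 0)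
  ext l
  simpa [hc.extend_apply] using congrFun h (c l)

theorem smul_mem_range_mulVecLin_of_det_consCol_eq_zero {m : Type*} {n : ℕ}
    (M : Matrix m (Fin n) R) (y : m → R)
    (h : ∀ u : Fin (n + 1) → m, ((consCol y M).submatrix u id).det = 0) (e : Fin n → m) :
    (M.submatrix e id).det • y ∈ LinearMap.range M.mulVecLin := by
  set s := signedMaxMinors ((consCol y M).submatrix e id)
  have hker : consCol y M *ᵥ s = 0 := funext fun i => by
    rw [mulVec_signedMaxMinors, h, Pi.zero_apply]
  have hs0 : s 0 = (M.submatrix e id).det := by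
    simp only [s, signedMaxMinors, Fin.val_zero, pow_zero, one_mul, submatrix_submatrix,
      Fin.succAbove_zero, comp_id, id_comp]
    exact congrArg det (submatrix_consCol_succ y M e)
  refine ⟨-Fin.tail s, ?_⟩
  rw [consCol_mulVec, hs0] at hker
  rw [mulVecLin_apply, mulVec_neg, neg_eq_iff_add_eq_zero, add_comm, hker]

/- McCoy's theorem. Take `t` maximal such that `a` does not kill some `t × t` minor; adjoining one
more column to it, `a` times the signed maximal minors of the resulting `t × (t + 1)` block is a
kernel vector of `M`, and it is nonzero since its first entry is `a` times that minor. -/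
theorem not_injective_mulVec_of_mul_det_eq_zero {m : Type*} {n : ℕ} (M : Matrix m (Fin n) R)
    {a : R} (ha : a ≠ 0) (h : ∀ u : Fin n → m, a * (M.submatrix u id).det = 0) :
    ¬ Injective M.mulVec := by
  intro hM
  classical
  let P : ℕ → Prop := fun t => ∃ (u : Fin t → m) (v : Fin t → Fin n),
    Injective v ∧ a * (M.submatrix u v).det ≠ 0
  have hP0 : P 0 := ⟨finZeroElim, finZeroElim, injective_of_subsingleton _, by simpa using ha⟩
  have hPn : ¬ P n := by
    rintro ⟨u, v, hv, hne⟩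
    set σ := Equiv.ofBijective v (Finite.injective_iff_bijective.mp hv)
    have : M.submatrix u v = (M.submatrix u id).submatrix id σ := rfl
    rw [this, det_permute', mul_left_comm, h, mul_zero] at hne
    exact hne rfl
  set t := Nat.findGreatest P n
  obtain ⟨e, c, hc, hne⟩ : P t := Nat.findGreatest_spec (Nat.zero_le n) hP0
  have ht : t < n := (Nat.findGreatest_le n).lt_of_ne fun htn => hPn (htn ▸ ⟨e, c, hc, hne⟩)
  have hmax : ¬ P (t + 1) := Nat.findGreatest_is_greatest (Nat.lt_succ_self t) ht
  obtain ⟨j, hj⟩ : ∃ j, j ∉ Set.range c := by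
    by_contra! hsurj
    have := Fintype.card_le_of_surjective c hsurj
    simp only [Fintype.card_fin] at this
    omega
  set c' : Fin (t + 1) → Fin n := Fin.cons j c
  have hc' : Injective c' := Fin.cons_injective_iff.mpr ⟨hj, hc⟩
  set N := M.submatrix id c'
  have hker : N *ᵥ (a • signedMaxMinors (N.submatrix e id)) = 0 := funext fun i => by
    rw [mulVec_smul, Pi.smul_apply, mulVec_signedMaxMinors, smul_eq_mul, Pi.zero_apply]
    by_contra hi
    exact hmax ⟨Fin.cons i e, c', hc', hi⟩
  have hzero : a • signedMaxMinors (N.submatrix e id) = 0 :=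
    injective_mulVec_submatrix_id hM hc' (hker.trans (mulVec_zero _).symm)
  apply hne
  simpa [signedMaxMinors, N, c', submatrix_submatrix] using congrFun hzero 0

end Matrix

namespace Finset

variable {α : Type*} [LinearOrder α]

theorem card_filter_lt_orderEmbOfFin (s : Finset α) {n : ℕ} (h : s.card = n) (k : Fin n) :
    #{j ∈ s | j < s.orderEmbOfFin h k} = k := by
  have : {j ∈ s | j < s.orderEmbOfFin h k} = (Iio k).map (s.orderEmbOfFin h).toEmbedding := by
    ext j
    simp only [mem_filter, mem_map, mem_Iio, RelEmbedding.coe_toEmbedding]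
    constructor
    · rintro ⟨hj, hlt⟩
      obtain ⟨i, rfl⟩ : j ∈ Set.range (s.orderEmbOfFin h) := by
        rwa [range_orderEmbOfFin]
      exact ⟨i, (s.orderEmbOfFin h).lt_iff_lt.mp hlt, rfl⟩
    · rintro ⟨i, hi, rfl⟩
      exact ⟨orderEmbOfFin_mem s h i, (s.orderEmbOfFin h).lt_iff_lt.mpr hi⟩
  rw [this, card_map, Fin.card_Iio]

theorem orderEmbOfFin_erase (s : Finset α) {n : ℕ} (h : s.card = n + 1) (k : Fin (n + 1))
    (h' : (s.erase (s.orderEmbOfFin h k)).card = n) (r : Fin n) :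
    (s.erase (s.orderEmbOfFin h k)).orderEmbOfFin h' r = s.orderEmbOfFin h (k.succAbove r) := by
  refine (congrFun (orderEmbOfFin_unique h'
    (fun r => mem_erase.mpr ⟨?_, orderEmbOfFin_mem s h _⟩)
    ((s.orderEmbOfFin h).strictMono.comp (Fin.strictMono_succAbove k))) r).symm
  exact (s.orderEmbOfFin h).injective.ne (Fin.succAbove_ne k r)

end Finset

section BuchsbaumRim

variable {R : Type*} [CommRing R] {f g : ℕ}

theorem epsCoeff_orderEmbOfFin (M : Matrix (Fin g) (Fin f) R) (I : Finset (Fin g))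
    (hI : I.card = f + 1) (k : Fin (f + 1)) :
    epsCoeff M I hI (I.orderEmbOfFin hI k) (orderEmbOfFin_mem I hI k) =
      (-1) ^ (f + k) * (M.submatrix (I.orderEmbOfFin hI ∘ k.succAbove) id).det := by
  have hsign : (-1 : R) ^ (f - k) = (-1) ^ (f + k) := by
    simp [show f + k = f - k + 2 * k by omega, pow_add]
  simp only [epsCoeff, card_filter_lt_orderEmbOfFin, hsign, coe_orderIsoOfFin_apply,
    orderEmbOfFin_erase]
  rfl

theorem sum_epsCoeff_mul (M : Matrix (Fin g) (Fin f) R) (I : Finset (Fin g))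
    (hI : I.card = f + 1) (y : Fin g → R) :
    ∑ i ∈ I.attach, epsCoeff M I hI i.1 i.2 * y i.1 =
      (-1) ^ f * ((Matrix.consCol y M).submatrix (I.orderEmbOfFin hI) id).det := by
  rw [← univ_eq_attach, ← (I.orderIsoOfFin hI).toEquiv.sum_comp, Matrix.det_succ_column_zero,
    mul_sum]
  refine sum_congr rfl fun k _ => ?_
  simp only [RelIso.coe_fn_toEquiv, coe_orderIsoOfFin_apply]
  rw [epsCoeff_orderEmbOfFin, Matrix.submatrix_submatrix, id_comp,
    Matrix.submatrix_consCol_succ]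
  simp only [Matrix.consCol, Matrix.submatrix_apply, Matrix.of_apply, id_eq, Fin.cons_zero,
    pow_add]
  ring

end BuchsbaumRim

theorem stmt14_general (R : Type*) [CommRing R] [IsNoetherianRing R] (f g : ℕ)
    (M : Matrix (Fin g) (Fin f) R)
    (hinj : Function.Injective M.mulVecLin)
    (htf : ∀ r : R, (∀ x : R, r * x = 0 → x = 0) →
      ∀ y : Fin g → R, r • y ∈ LinearMap.range M.mulVecLin →
        y ∈ LinearMap.range M.mulVecLin) :
    ∀ y : Fin g → R,
      (∀ (I : Finset (Fin g)) (hI : I.card = f + 1),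
        ∑ i ∈ I.attach, epsCoeff M I hI i.1 i.2 * y i.1 = 0) ↔
      y ∈ LinearMap.range M.mulVecLin := by
  intro y
  have hminors : (∀ (I : Finset (Fin g)) (hI : I.card = f + 1),
      ∑ i ∈ I.attach, epsCoeff M I hI i.1 i.2 * y i.1 = 0) ↔
      ∀ u : Fin (f + 1) → Fin g, ((consCol y M).submatrix u id).det = 0 := by
    simp only [sum_epsCoeff_mul, (isUnit_one.neg.pow f).mul_right_eq_zero]
    exact ⟨det_submatrix_eq_zero_of_forall_orderEmbOfFin _ _, fun h I hI => h _⟩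
  rw [hminors]
  constructor
  · intro h
    by_contra hy
    let N : Ideal R := (LinearMap.range M.mulVecLin).comap (LinearMap.toSpanSingleton R _ y)
    have hN : Disjoint (N : Set R) (nonZeroDivisors R) := Set.disjoint_left.mpr fun r hr hreg =>
      hy (htf r (mem_nonZeroDivisors_iff_left.mp hreg) y hr)
    obtain ⟨a, ha, ha0⟩ :=
      SetLike.exists_of_lt (Ideal.bot_lt_annihilator_of_disjoint_nonZeroDivisors hN)
    refine not_injective_mulVec_of_mul_det_eq_zero M ha0 (fun u => ?_) hinj
    have hminor_mem : (M.submatrix u id).det ∈ N :=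
      smul_mem_range_mulVecLin_of_det_consCol_eq_zero M y h u
    exact congrArg Subtype.val (Module.mem_annihilator.mp ha ⟨_, hminor_mem⟩)
  · rintro ⟨x, rfl⟩ u
    rw [submatrix_consCol]
    exact det_consCol_mulVec _ x

/-- Let `M = coker φ` be nonzero and torsion free, with `φ` injective (so that
`0 → F → G → M → 0` is a finite free resolution). Then
`F →(φ) G →(ε*) ∧^f F* ⊗ ∧^{f+1}G` is exact at `G`: an element `y ∈ G` is killed
by every component of `ε*` (the components being indexed by the `(f+1)`-subsets
`I` of `{1,…,g}`) if and only if `y` is in the image of `φ`. -/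
theorem stmt14 (R : Type*) [CommRing R] [IsNoetherianRing R] (f g : ℕ)
    (M : Matrix (Fin g) (Fin f) R)
    (hinj : Function.Injective M.mulVecLin)
    (hnonzero : LinearMap.range M.mulVecLin ≠ ⊤)
    (htf : ∀ r : R, (∀ x : R, r * x = 0 → x = 0) →
      ∀ y : Fin g → R, r • y ∈ LinearMap.range M.mulVecLin →
        y ∈ LinearMap.range M.mulVecLin) :
    ∀ y : Fin g → R,
      (∀ (I : Finset (Fin g)) (hI : I.card = f + 1),
        ∑ i ∈ I.attach, epsCoeff M I hI i.1 i.2 * y i.1 = 0) ↔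
      y ∈ LinearMap.range M.mulVecLin :=
  stmt14_general R f g M hinj htf
end

section
/- Let μ ⊆ λ be partitions with μ ≠ λ, and suppose λ/μ is the shift by (s,t) of a partition γ satisfying γ_1 ≤ g and γ̃_{γ_1} > γ_1 - (g - f + 1) for integers f ≥ 1 and g ≥ 1 with γ_1 > g - f + 1. Then the threshold number satisfies T_{λ/μ}(f,g) = g - γ_1; in particular T_{λ/μ}(f,g) ≥ 0. -/
open NatPartition

/-- `λ/μ` is the shift of `γ` by `(s,t)`: in 1-indexed terms, `μ_j = t` and
`λ_j = t + γ_{j-s}` for `s < j ≤ s + γ̃₁`, and `μ_j = λ_j` otherwise.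
(Here rows are 0-indexed, so row `r` corresponds to `j = r + 1`.) -/
def IsShiftOf (lam mu gamma : NatPartition) (s t : ℕ) : Prop :=
  (∀ r : ℕ, s ≤ r → r < s + gamma.conj 0 →
    mu.parts r = t ∧ lam.parts r = t + gamma.parts (r - s)) ∧
  (∀ r : ℕ, ¬(s ≤ r ∧ r < s + gamma.conj 0) → mu.parts r = lam.parts r)

/-!
Write `m = γ₁`. Every row of `λ/μ` has at most `m` boxes, so `ν''(λ,μ,m) = λ`, and `ν'(λ,μ,n) ⊆ λ`
always; hence `g - m` lies in the threshold set. Conversely, for `u > g - m` put `c = g - u < m` and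
`d = f - u`. The hypothesis on `γ̃_{γ₁}` gives `d < γ̃_c`, so the row `i = s + γ̃_c - d - 1` lies in the
shifted block, where `ν''(λ,μ,g-u)_i ≤ t + c`. But column `t + c` of `λ` reaches at least row
`s + γ̃_c`, so column `t + c` of `ν'(λ,μ,f-u)` reaches row `i`, i.e. `ν'(λ,μ,f-u)_i > t + c`.
-/

namespace NatPartition

theorem lt_conj_iff (l : NatPartition) {c k : ℕ} : k < l.conj c ↔ c < l.parts k := by
  constructor
  · intro h
    by_contra! hk
    have hsub : (l.parts.support.filter fun j => c + 1 ≤ l.parts j) ⊆ Finset.range k := by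
      intro j hj
      rw [Finset.mem_filter] at hj
      rw [Finset.mem_range]
      by_contra! hjk
      have := l.antitone hjk
      omega
    have := Finset.card_le_card hsub
    rw [Finset.card_range] at this
    unfold conj at h
    omega
  · intro h
    have hsub : Finset.range (k + 1) ⊆ l.parts.support.filter fun j => c + 1 ≤ l.parts j := by
      intro j hj
      have := l.antitone (Nat.le_of_lt_succ (Finset.mem_range.1 hj))
      exact Finset.mem_filter.2 ⟨Finsupp.mem_support_iff.2 (by omega), by omega⟩
    simpa [conj] using Finset.card_le_card hsub

theorem conj_antitone (l : NatPartition) : Antitone l.conj := fun _ _ hij =>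
  Finset.card_le_card fun _ hx => by
    rw [Finset.mem_filter] at hx ⊢
    exact ⟨hx.1, by omega⟩

theorem conj_le_conj {lam mu : NatPartition} (hsub : ∀ i, mu.parts i ≤ lam.parts i) (i : ℕ) :
    mu.conj i ≤ lam.conj i :=
  Finset.card_le_card fun j hj => by
    rw [Finset.mem_filter, Finsupp.mem_support_iff] at hj ⊢
    have := hsub j
    exact ⟨by omega, by omega⟩

end NatPartition

section Nu

variable {lam mu : NatPartition}

theorem nupConj_le_conj (hsub : ∀ i, mu.parts i ≤ lam.parts i) (n : ℤ) (k : ℕ) :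
    nupConj lam mu n k ≤ lam.conj k := by
  have := conj_le_conj hsub k
  unfold nupConj
  omega

theorem nupConj_antitone (lam mu : NatPartition) (n : ℤ) : Antitone (nupConj lam mu n) :=
  fun _ _ hjk => by
    have := lam.conj_antitone hjk
    have := mu.conj_antitone hjk
    unfold nupConj
    omega

theorem conj_sub_le_nupConj (lam mu : NatPartition) {n : ℤ} {d : ℕ} (hn : n ≤ d) (k : ℕ) :
    (lam.conj k : ℤ) - d ≤ nupConj lam mu n k := by
  unfold nupConj
  omega

theorem nupParts_le_parts (hsub : ∀ i, mu.parts i ≤ lam.parts i) (n : ℤ) (i : ℕ) :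
    nupParts lam mu n i ≤ lam.parts i := by
  have hsubset : ((Finset.range (lam.parts 0)).filter fun k => i + 1 ≤ nupConj lam mu n k)
      ⊆ Finset.range (lam.parts i) := by
    intro k hk
    rw [Finset.mem_filter] at hk
    have := nupConj_le_conj hsub n k
    exact Finset.mem_range.2 (lam.lt_conj_iff.1 (by omega))
  unfold nupParts
  simpa using Finset.card_le_card hsubset

theorem lt_nupParts {n : ℤ} {i k : ℕ} (hk : k < lam.parts 0) (hi : i < nupConj lam mu n k) :
    k < nupParts lam mu n i := by
  have hsubset : Finset.range (k + 1)
      ⊆ (Finset.range (lam.parts 0)).filter fun j => i + 1 ≤ nupConj lam mu n j := by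
    intro j hj
    have hjk := Nat.le_of_lt_succ (Finset.mem_range.1 hj)
    have := nupConj_antitone lam mu n hjk
    exact Finset.mem_filter.2 ⟨Finset.mem_range.2 (by omega), by omega⟩
  unfold nupParts
  simpa using Finset.card_le_card hsubset

theorem nuppParts_eq_parts {n : ℤ} {i : ℕ} (h : (lam.parts i : ℤ) ≤ mu.parts i + n) :
    nuppParts lam mu n i = lam.parts i := by
  unfold nuppParts
  omega

theorem nuppParts_le {n : ℤ} {c : ℕ} (hn : n ≤ c) (i : ℕ) :
    nuppParts lam mu n i ≤ mu.parts i + c := by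
  unfold nuppParts
  omega

end Nu

namespace IsShiftOf

variable {lam mu gamma : NatPartition} {s t : ℕ}

theorem parts_le (h : IsShiftOf lam mu gamma s t) (r : ℕ) : mu.parts r ≤ lam.parts r := by
  by_cases hr : s ≤ r ∧ r < s + gamma.conj 0
  · obtain ⟨hmu, hlam⟩ := h.1 r hr.1 hr.2
    omega
  · exact (h.2 r hr).le

theorem parts_le_add (h : IsShiftOf lam mu gamma s t) (r : ℕ) :
    lam.parts r ≤ mu.parts r + gamma.parts 0 := by
  by_cases hr : s ≤ r ∧ r < s + gamma.conj 0
  · obtain ⟨hmu, hlam⟩ := h.1 r hr.1 hr.2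
    have := gamma.antitone (Nat.zero_le (r - s))
    omega
  · have := h.2 r hr
    omega

theorem add_conj_le_conj (h : IsShiftOf lam mu gamma s t) {c : ℕ} (hc : 0 < gamma.conj c) :
    s + gamma.conj c ≤ lam.conj (t + c) := by
  have hc0 := gamma.conj_antitone (Nat.zero_le c)
  obtain ⟨-, hlam⟩ := h.1 (s + (gamma.conj c - 1)) (by omega) (by omega)
  have hrow : c < gamma.parts (s + (gamma.conj c - 1) - s) := gamma.lt_conj_iff.1 (by omega)
  have := lam.lt_conj_iff.2 (show t + c < lam.parts (s + (gamma.conj c - 1)) by omega)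
  omega

theorem mem_threshSet (h : IsShiftOf lam mu gamma s t) (f g : ℤ) :
    g - (gamma.parts 0 : ℤ) ∈ threshSet lam mu f g := fun i => by
  have := h.parts_le_add i
  rw [nuppParts_eq_parts (by omega)]
  exact nupParts_le_parts h.parts_le _ i

theorem not_nupSubNupp (h : IsShiftOf lam mu gamma s t) {c d : ℕ} (hd : d < gamma.conj c)
    {a b : ℤ} (ha : a ≤ d) (hb : b ≤ c) : ¬ nupSubNupp lam mu a b := by
  intro hab
  have hc0 := gamma.conj_antitone (Nat.zero_le c)
  set i := s + (gamma.conj c - (d + 1))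
  obtain ⟨hmu, hlam⟩ := h.1 i (by omega) (by omega)
  have hrow : c < gamma.parts (i - s) := gamma.lt_conj_iff.1 (by omega)
  have hcol := h.add_conj_le_conj (c := c) (by omega)
  have hnup : t + c < nupParts lam mu a i := by
    have := lam.antitone (Nat.zero_le i)
    have := conj_sub_le_nupConj lam mu ha (t + c)
    exact lt_nupParts (by omega) (by omega)
  have := nuppParts_le (lam := lam) (mu := mu) hb i
  have := hab i
  omega

end IsShiftOf

theorem stmt19_general (lam mu gamma : NatPartition) (s t : ℕ)
    (hshift : IsShiftOf lam mu gamma s t)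
    (f g : ℤ)
    (h1 : (gamma.parts 0 : ℤ) ≤ g)
    (h2 : g - f + 1 < (gamma.parts 0 : ℤ))
    (h3 : (gamma.parts 0 : ℤ) - (g - f + 1) < (gamma.conj (gamma.parts 0 - 1) : ℤ)) :
    IsGreatest (threshSet lam mu f g) (g - (gamma.parts 0 : ℤ)) ∧
      0 ≤ g - (gamma.parts 0 : ℤ) := by
  refine ⟨⟨hshift.mem_threshSet f g, fun u hu => ?_⟩, by omega⟩
  by_contra! hlt
  have hc : (g - u).toNat ≤ gamma.parts 0 - 1 := by omega
  have hd : (f - u).toNat < gamma.conj (gamma.parts 0 - 1) := by omega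
  exact hshift.not_nupSubNupp (hd.trans_le (gamma.conj_antitone hc))
    (Int.self_le_toNat _) (Int.self_le_toNat _) hu

/-- If `λ/μ` is the shift by `(s,t)` of a partition `γ` with `g - f + 1 < γ₁ ≤ g`
and `γ̃_{γ₁} > γ₁ - (g - f + 1)`, then `T_{λ/μ}(f,g) = g - γ₁ ≥ 0`. -/
theorem stmt19 (lam mu gamma : NatPartition) (s t : ℕ)
    (hsub : ∀ i, mu.parts i ≤ lam.parts i)
    (hne : mu.parts ≠ lam.parts)
    (hshift : IsShiftOf lam mu gamma s t)
    (f g : ℤ) (hf : 1 ≤ f) (hg : 1 ≤ g)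
    (h1 : (gamma.parts 0 : ℤ) ≤ g)
    (h2 : g - f + 1 < (gamma.parts 0 : ℤ))
    (h3 : (gamma.parts 0 : ℤ) - (g - f + 1) < (gamma.conj (gamma.parts 0 - 1) : ℤ)) :
    IsGreatest (threshSet lam mu f g) (g - (gamma.parts 0 : ℤ)) ∧
      0 ≤ g - (gamma.parts 0 : ℤ) :=
  stmt19_general lam mu gamma s t hshift f g h1 h2 h3
end
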